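/- arXiv:1804.05230 — 3 statements merged into one kernel-verified Lean document; each statement's English description precedes it below -/
import Mathlib

section
/- Let d ≥ c ≥ 2 with d ≠ 2, and let B be the non-backtracking matrix of the complete bipartite graph K_{d,c} (a 2cd × 2cd matrix). Then the characteristic polynomial of B over ℂ equals (X² − 1)^{(c−1)(d−1)} · (X² + (c−1))^{d−1} · (X² + (d−1))^{c−1} · (X² − (c−1)(d−1)). Consequently the eigenvalues of B are ±1 with multiplicity (c−1)(d−1) each, ±i√(c−1) with multiplicity d−1 each, ±i√(d−1) with multiplicity c−1 each, and ±√(c−1)√(d−1) with multiplicity 1 each, so the spectral radius of B equals √(c−1)·√(d−1). -/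
/-! Splitting the arcs into left-to-right and right-to-left ones,
`B = [[0, A_d ⊗ I], [I ⊗ A_c, 0]]` where `A_n = J - I` is the adjacency matrix of `K_n`.
An off-diagonal block matrix `[[0, P], [Q, 0]]` has characteristic polynomial `χ_{PQ}(X²)`,
and here `PQ = A_d ⊗ A_c`. As `A_n` has an explicit eigenbasis with eigenvalues `n - 1` (once)
and `-1`, the eigenvalues of `A_d ⊗ A_c` are the products of those of the factors; so every
eigenvalue `μ` of `B` has `μ² ∈ {(c-1)(d-1), -(c-1), -(d-1), 1}`. -/

/-- The non-backtracking matrix of the complete bipartite graph `K_{d,c}` (parts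
`Fin d` and `Fin c`), indexed by the `2cd` directed edges: `Sum.inl (i, j)` is the
arc from left vertex `i` to right vertex `j`, and `Sum.inr (i, j)` is the arc from
right vertex `j` to left vertex `i`.  The entry at a pair of arcs is `1` iff the
second arc starts where the first one ends and does not return to its tail. -/
def nbCompleteBipartite (d c : ℕ) :
    Matrix ((Fin d × Fin c) ⊕ (Fin d × Fin c)) ((Fin d × Fin c) ⊕ (Fin d × Fin c)) ℂ :=
  fun e f =>
  match e, f with
  | Sum.inl (i, j), Sum.inr (i', j') => if j' = j ∧ i' ≠ i then 1 else 0
  | Sum.inr (i, j), Sum.inl (i', j') => if i' = i ∧ j' ≠ j then 1 else 0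
  | _, _ => 0

open Polynomial Matrix Kronecker SimpleGraph

namespace Matrix

variable {m n R : Type*} [Fintype m] [Fintype n] [DecidableEq m] [DecidableEq n] [CommRing R]

theorem charpoly_conj_of_mul_eq_one {P P' : Matrix n n R} (h : P * P' = 1) (M : Matrix n n R) :
    (P * M * P').charpoly = M.charpoly := by
  rw [charpoly_mul_comm, ← Matrix.mul_assoc, mul_eq_one_comm.mp h, Matrix.one_mul]

theorem charpoly_kronecker_of_eq_conj_diagonal {A : Matrix m m R} {B : Matrix n n R}
    {P P' : Matrix m m R} {Q Q' : Matrix n n R} {a : m → R} {b : n → R}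
    (hP : P * P' = 1) (hA : A = P * diagonal a * P')
    (hQ : Q * Q' = 1) (hB : B = Q * diagonal b * Q') :
    (A ⊗ₖ B).charpoly = ∏ p : m × n, (X - C (a p.1 * b p.2)) := by
  have hPQ : (P ⊗ₖ Q) * (P' ⊗ₖ Q') = 1 := by
    rw [← mul_kronecker_mul, hP, hQ, one_kronecker_one]
  rw [hA, hB, mul_kronecker_mul, mul_kronecker_mul, diagonal_kronecker_diagonal,
    charpoly_conj_of_mul_eq_one hPQ, charpoly_diagonal]

theorem charpoly_comp_eq_det (M : Matrix n n R) (p : R[X]) :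
    M.charpoly.comp p = (scalar n p - M.map C).det := by
  rw [charpoly, ← coe_compRingHom_apply, RingHom.map_det]
  congr 1
  ext i j
  by_cases h : i = j
  · subst h; simp
  · simp [h]

theorem charpoly_fromBlocks_zero₁₁_zero₂₂ (P Q : Matrix n n R) :
    (fromBlocks 0 P Q 0).charpoly = (P * Q).charpoly.comp (X ^ 2) := by
  -- `charmatrix * N` is block upper triangular, and `det N = X ^ card n` cancels.
  let N : Matrix (n ⊕ n) (n ⊕ n) R[X] := fromBlocks (scalar n X) 0 (Q.map C) 1
  have hprod : (fromBlocks 0 P Q 0).charmatrix * N =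
      fromBlocks (scalar n (X ^ 2) - (P * Q).map C) (-P.map C) 0 (scalar n X) := by
    simp [N, charmatrix_fromBlocks, fromBlocks_multiply, sq, Matrix.map_mul, sub_eq_add_neg,
      -scalar_apply, (scalar_commute (X : R[X]) (fun _ => Commute.all _ _) _).eq]
  have hN : N.det = X ^ Fintype.card n := by
    simp [N]
  refine (isRegular_X_pow (R := R) (Fintype.card n)).right ?_
  calc (fromBlocks 0 P Q 0).charpoly * X ^ Fintype.card n
      = ((fromBlocks 0 P Q 0).charmatrix * N).det := by rw [det_mul, hN, charpoly]
    _ = (scalar n (X ^ 2) - (P * Q).map C).det * X ^ Fintype.card n := by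
      rw [hprod, det_fromBlocks_zero₂₁]
      simp
    _ = (P * Q).charpoly.comp (X ^ 2) * X ^ Fintype.card n := by rw [charpoly_comp_eq_det]

end Matrix

namespace SimpleGraph

variable {K : Type*} [Field K]

-- Columns: the all-ones vector and the vectors `e_k - e_0`.
variable (K) in
def completeEigvecs (n : ℕ) : Matrix (Fin (n + 1)) (Fin (n + 1)) K :=
  of fun x k => if k = 0 then 1 else (if x = k then 1 else 0) - (if x = 0 then 1 else 0)

-- Columns: the all-ones vector and the vectors `e_k - e_0`.
variable (K) in
def completeEigvecsInv (n : ℕ) : Matrix (Fin (n + 1)) (Fin (n + 1)) K :=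
  of fun k y => if k = 0 then ((n : K) + 1)⁻¹ else (if k = y then 1 else 0) - ((n : K) + 1)⁻¹

variable (K) in
def completeEigvals (n : ℕ) : Fin (n + 1) → K := Fin.cons (n : K) fun _ => -1

theorem sum_completeEigvecs_apply (n : ℕ) (k : Fin (n + 1)) :
    ∑ x, completeEigvecs K n x k = if k = 0 then (n : K) + 1 else 0 := by
  by_cases hk : k = 0 <;> simp [completeEigvecs, hk, Finset.sum_sub_distrib]

theorem completeEigvecsInv_mul_completeEigvecs [CharZero K] (n : ℕ) :
    completeEigvecsInv K n * completeEigvecs K n = 1 := by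
  have hn : (n : K) + 1 ≠ 0 := by exact_mod_cast n.succ_ne_zero
  ext k y
  by_cases hk : k = 0
  · simp [completeEigvecsInv, mul_apply, hk, ← Finset.mul_sum, sum_completeEigvecs_apply,
      one_apply, hn, eq_comm]
  · simp [completeEigvecsInv, mul_apply, hk, sub_mul, Finset.sum_sub_distrib, ← Finset.mul_sum,
      sum_completeEigvecs_apply, one_apply]
    by_cases hy : y = 0 <;> simp [completeEigvecs, hy, hk, hn]

theorem completeEigvecs_mul_completeEigvecsInv [CharZero K] (n : ℕ) :
    completeEigvecs K n * completeEigvecsInv K n = 1 :=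
  mul_eq_one_comm.mp (completeEigvecsInv_mul_completeEigvecs n)

theorem adjMatrix_completeGraph_mul_completeEigvecs (n : ℕ) :
    (completeGraph (Fin (n + 1))).adjMatrix K * completeEigvecs K n =
      completeEigvecs K n * diagonal (completeEigvals K n) := by
  ext x k
  rw [adjMatrix_completeGraph_eq_of_one_sub_one, Matrix.sub_mul, Matrix.one_mul, Matrix.sub_apply,
    mul_apply, mul_diagonal]
  simp only [of_apply, Pi.one_apply, one_mul, sum_completeEigvecs_apply]
  induction k using Fin.cases <;> simp [completeEigvecs, completeEigvals, Fin.succ_ne_zero]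

theorem adjMatrix_completeGraph_eq_conj_diagonal [CharZero K] (n : ℕ) :
    (completeGraph (Fin (n + 1))).adjMatrix K =
      completeEigvecs K n * diagonal (completeEigvals K n) * completeEigvecsInv K n := by
  rw [← adjMatrix_completeGraph_mul_completeEigvecs, Matrix.mul_assoc,
    completeEigvecs_mul_completeEigvecsInv, Matrix.mul_one]

theorem norm_completeEigvals_le (n : ℕ) (k : Fin (n + 1)) :
    ‖completeEigvals ℂ n k‖ ≤ n := by
  induction k using Fin.cases with
  | zero => simp [completeEigvals]
  | succ k => simpa [completeEigvals] using Nat.one_le_iff_ne_zero.mpr (Fin.pos k).ne'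

end SimpleGraph

theorem nbCompleteBipartite_eq_fromBlocks (d c : ℕ) :
    nbCompleteBipartite d c =
      fromBlocks 0 ((completeGraph (Fin d)).adjMatrix ℂ ⊗ₖ 1)
        (1 ⊗ₖ (completeGraph (Fin c)).adjMatrix ℂ) 0 := by
  ext (⟨i, j⟩ | ⟨i, j⟩) (⟨i', j'⟩ | ⟨i', j'⟩) <;>
    simp [nbCompleteBipartite, one_apply, ite_and, eq_comm]
  split_ifs <;> simp_all

theorem charpoly_nbCompleteBipartite (m n : ℕ) :
    (nbCompleteBipartite (m + 1) (n + 1)).charpoly =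
      ∏ p : Fin (m + 1) × Fin (n + 1),
        (X ^ 2 - C (completeEigvals ℂ m p.1 * completeEigvals ℂ n p.2)) := by
  rw [nbCompleteBipartite_eq_fromBlocks, charpoly_fromBlocks_zero₁₁_zero₂₂,
    ← mul_kronecker_mul, Matrix.mul_one, Matrix.one_mul,
    charpoly_kronecker_of_eq_conj_diagonal (completeEigvecs_mul_completeEigvecsInv m)
      (adjMatrix_completeGraph_eq_conj_diagonal m) (completeEigvecs_mul_completeEigvecsInv n)
      (adjMatrix_completeGraph_eq_conj_diagonal n), prod_comp]
  simp

theorem mem_spectrum_nbCompleteBipartite_iff (m n : ℕ) (μ : ℂ) :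
    μ ∈ spectrum ℂ (nbCompleteBipartite (m + 1) (n + 1)) ↔
      ∃ p : Fin (m + 1) × Fin (n + 1),
        μ ^ 2 = completeEigvals ℂ m p.1 * completeEigvals ℂ n p.2 := by
  simp [mem_spectrum_iff_isRoot_charpoly, charpoly_nbCompleteBipartite, eval_prod,
    Finset.prod_eq_zero_iff, sub_eq_zero]

theorem prod_X_sq_sub_completeEigvals_mul (m n : ℕ) :
    ∏ p : Fin (m + 1) × Fin (n + 1),
        (X ^ 2 - C (completeEigvals ℂ m p.1 * completeEigvals ℂ n p.2)) =
      (X ^ 2 - 1) ^ (n * m) * (X ^ 2 + C (n : ℂ)) ^ m * (X ^ 2 + C (m : ℂ)) ^ n *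
        (X ^ 2 - C ((n : ℂ) * m)) := by
  simp only [Fintype.prod_prod_type, Fin.prod_univ_succ, completeEigvals, Fin.cons_zero,
    Fin.cons_succ, Finset.prod_const, Finset.card_univ, Fintype.card_fin, C_mul, C_neg, C_1,
    mul_pow, ← pow_mul]
  ring

theorem stmt_2_general (d c : ℕ) (hc : 2 ≤ c) (hcd : c ≤ d) :
    (nbCompleteBipartite d c).charpoly
        = (Polynomial.X ^ 2 - 1) ^ ((c - 1) * (d - 1))
            * (Polynomial.X ^ 2 + Polynomial.C ((c : ℂ) - 1)) ^ (d - 1)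
            * (Polynomial.X ^ 2 + Polynomial.C ((d : ℂ) - 1)) ^ (c - 1)
            * (Polynomial.X ^ 2 - Polynomial.C (((c : ℂ) - 1) * ((d : ℂ) - 1)))
    ∧ (∀ μ ∈ spectrum ℂ (nbCompleteBipartite d c),
        ‖μ‖ ≤ Real.sqrt ((c : ℝ) - 1) * Real.sqrt ((d : ℝ) - 1))
    ∧ ∃ μ ∈ spectrum ℂ (nbCompleteBipartite d c),
        ‖μ‖ = Real.sqrt ((c : ℝ) - 1) * Real.sqrt ((d : ℝ) - 1) := by
  obtain ⟨n, rfl⟩ : ∃ n, c = n + 1 := ⟨c - 1, by omega⟩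
  obtain ⟨m, rfl⟩ : ∃ m, d = m + 1 := ⟨d - 1, by omega⟩
  simp only [Nat.cast_add, Nat.cast_one, add_sub_cancel_right, Nat.add_sub_cancel]
  rw [← Real.sqrt_mul n.cast_nonneg]
  refine ⟨?_, fun μ hμ => ?_, ?_⟩
  · rw [charpoly_nbCompleteBipartite, prod_X_sq_sub_completeEigvals_mul]
  · obtain ⟨⟨i, j⟩, hμ⟩ := (mem_spectrum_nbCompleteBipartite_iff m n μ).mp hμ
    refine Real.le_sqrt_of_sq_le ?_
    calc ‖μ‖ ^ 2 = ‖completeEigvals ℂ m i‖ * ‖completeEigvals ℂ n j‖ := by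
          rw [← norm_pow, hμ, norm_mul]
      _ ≤ m * n := mul_le_mul (norm_completeEigvals_le m i) (norm_completeEigvals_le n j)
          (norm_nonneg _) m.cast_nonneg
      _ = n * m := mul_comm _ _
  · refine ⟨Real.sqrt (n * m),
      (mem_spectrum_nbCompleteBipartite_iff m n _).mpr ⟨(0, 0), ?_⟩, ?_⟩
    · rw [← Complex.ofReal_pow, Real.sq_sqrt (by positivity)]
      simp [completeEigvals, mul_comm]
    · rw [Complex.norm_real, Real.norm_of_nonneg (Real.sqrt_nonneg _)]

/-- For `d ≥ c ≥ 2`, `d ≠ 2`, the characteristic polynomial of the non-backtracking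
matrix `B` of `K_{d,c}` is
`(X²-1)^((c-1)(d-1)) · (X²+(c-1))^(d-1) · (X²+(d-1))^(c-1) · (X²-(c-1)(d-1))`,
and the spectral radius of `B` equals `√(c-1)·√(d-1)`. -/
theorem stmt_2 (d c : ℕ) (hc : 2 ≤ c) (hcd : c ≤ d) (hd2 : d ≠ 2) :
    (nbCompleteBipartite d c).charpoly
        = (Polynomial.X ^ 2 - 1) ^ ((c - 1) * (d - 1))
            * (Polynomial.X ^ 2 + Polynomial.C ((c : ℂ) - 1)) ^ (d - 1)
            * (Polynomial.X ^ 2 + Polynomial.C ((d : ℂ) - 1)) ^ (c - 1)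
            * (Polynomial.X ^ 2 - Polynomial.C (((c : ℂ) - 1) * ((d : ℂ) - 1)))
    ∧ (∀ μ ∈ spectrum ℂ (nbCompleteBipartite d c),
        ‖μ‖ ≤ Real.sqrt ((c : ℝ) - 1) * Real.sqrt ((d : ℝ) - 1))
    ∧ ∃ μ ∈ spectrum ℂ (nbCompleteBipartite d c),
        ‖μ‖ = Real.sqrt ((c : ℝ) - 1) * Real.sqrt ((d : ℝ) - 1) :=
  stmt_2_general d c hc hcd
end

section
/- Let G = (V, E) be a finite simple graph with a sign ξ(e) ∈ {−1,+1} on each edge e ∈ E. Let A be the signed adjacency matrix (A[u,v] = ξ({u,v}) if {u,v} ∈ E, else 0), D the diagonal degree matrix, L(u) = (1−u²)·I_{|V|} + u²·D − u·A the deformed Laplacian, and B the signed non-backtracking matrix of G (a 2|E| × 2|E| matrix). Then for every real u: det(I_{2|E|} − u·B) · (1 − u²)^{|V|} = det(L(u)) · (1 − u²)^{|E|}. (Equivalently, for u ≠ ±1, det(I − uB) = det(L(u)) · (1−u²)^{|E|−|V|}.) -/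
/-! Let `S` and `T` be the `V × darts` matrices recording the tail of a dart and its signed
head, and `J` the signed reversal of darts. Then `B = Tᵀ S - J`, `S J = T`, `J² = 1`, `S Tᵀ = A`
and `T Tᵀ = D`, so `(1 - uB)(1 - uJ) = (1 - u²) - (u Tᵀ)(S - u T)`. Sylvester's determinant
identity moves this product from darts to vertices, where `(1 - u²) - (S - u T)(u Tᵀ) = L(u)`.
Pairing each dart with its reversal gives `det (1 - uJ) = (1 - u²)^|E|`. This proves the formula
multiplied by `(1 - u²)^|E|` over any commutative ring; over `ℝ` that factor cancels for
`u ≠ ±1`, and continuity covers `u = ±1`. -/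

open scoped Matrix
open Matrix Finset

namespace Matrix

variable {m n R : Type*} [Fintype m] [Fintype n] [DecidableEq n] [CommRing R]

theorem pow_card_mul_det_smul_one_sub_mul_comm [DecidableEq m] (X : Matrix m n R)
    (Y : Matrix n m R) (c : R) :
    c ^ Fintype.card n * det (c • 1 - X * Y) = c ^ Fintype.card m * det (c • 1 - Y * X) := by
  simpa [eval_charpoly, smul_one_eq_diagonal] using
    congrArg (Polynomial.eval c) (charpoly_mul_comm' X Y)

theorem one_sub_smul_mul_one_sub_smul_of_mul_self_eq_one (X : Matrix n m R) (S T : Matrix m n R)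
    (J : Matrix n n R) (hJ : J * J = 1) (hSJ : S * J = T) (u : R) :
    (1 - u • (X * S - J)) * (1 - u • J) = (1 - u ^ 2) • 1 - (u • X) * (S - u • T) := by
  have hXSJ : X * S * J = X * T := by rw [Matrix.mul_assoc, hSJ]
  simp only [Matrix.mul_sub, Matrix.sub_mul, Matrix.one_mul, Matrix.mul_one, Matrix.smul_mul,
    Matrix.mul_smul, hXSJ, hJ, smul_sub, sub_smul, one_smul, smul_smul]
  module

theorem det_one_sub_smul_of_involutive (s : n → n) (hs : Function.Involutive s) (p : n → Prop)
    [DecidablePred p] (hp : ∀ i, p (s i) ↔ ¬ p i) (w : n → R) (hw : ∀ i, w i * w (s i) = 1)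
    (u : R) :
    det (1 - u • of fun i j => if j = s i then w i else 0) =
      (1 - u ^ 2) ^ Fintype.card {i // ¬ p i} := by
  -- `p` picks one point of each orbit of `s`: both diagonal blocks along `p` are `1`, and the
  -- Schur complement is `(1 - u ^ 2) • 1`.
  set M : Matrix n n R := 1 - u • of fun i j => if j = s i then w i else 0
  have hdiag (q : n → Prop) (hq : ∀ i, q i → ¬ q (s i)) : toBlock M q q = 1 := by
    ext ⟨i, hi⟩ ⟨j, hj⟩
    have : j ≠ s i := fun h => hq i hi (h ▸ hj)
    simp [M, toBlock_apply, one_apply, this]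
  have hschur : 1 - toBlock M (¬p ·) p * toBlock M p (¬p ·) = (1 - u ^ 2) • 1 := by
    ext ⟨i, hi⟩ ⟨j, hj⟩
    have hsi : p (s i) := (hp i).2 hi
    have hne {k l : n} (hk : p k) (hl : ¬p l) : k ≠ l := fun h => hl (h ▸ hk)
    rw [Matrix.sub_apply, mul_apply, Fintype.sum_eq_single ⟨s i, hsi⟩]
    · by_cases hij : i = j
      · subst hij
        simp only [M, toBlock_apply, Matrix.sub_apply, Matrix.smul_apply, of_apply, one_apply_eq,
          one_apply_ne (hne hsi hi), one_apply_ne (hne hsi hi).symm, hs i, if_true, smul_eq_mul]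
        linear_combination -u ^ 2 * hw i
      · have : j ≠ s (s i) := by rwa [hs i, ne_comm]
        simp [M, toBlock_apply, hij, this, hne hsi hj, (hne hsi hi).symm]
    · rintro ⟨k, hk⟩ hk'
      have : k ≠ s i := fun h => hk' (Subtype.ext h)
      simp [M, toBlock_apply, this, (hne hk hi).symm]
  rw [det_toBlock _ p, hdiag p fun i hi h => (hp i).1 h hi,
    hdiag (¬p ·) fun i hi h => h ((hp i).2 hi), det_fromBlocks_one₁₁, hschur, det_smul, det_one,
    mul_one]

end Matrix

namespace SimpleGraph

variable {V R : Type*} (G : SimpleGraph V) [CommRing R] (ξ : V → V → R)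

def signedAdjMatrix [DecidableRel G.Adj] : Matrix V V R :=
  of fun x y => if G.Adj x y then ξ x y else 0

variable [DecidableEq V]

def signedNonBacktrackingMatrix : Matrix G.Dart G.Dart R :=
  of fun e f => if e.snd = f.fst ∧ e.fst ≠ f.snd then ξ e.fst e.snd else 0

variable (R) in
def dartSourceMatrix : Matrix V G.Dart R := of fun v d => if d.fst = v then 1 else 0

def signedDartTargetMatrix : Matrix V G.Dart R :=
  of fun v d => if d.snd = v then ξ d.fst d.snd else 0

def signedDartReversalMatrix : Matrix G.Dart G.Dart R :=
  of fun d d' => if d' = d.symm then ξ d.fst d.snd else 0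

variable [Fintype V]

theorem signedNonBacktrackingMatrix_eq :
    G.signedNonBacktrackingMatrix ξ =
      (G.signedDartTargetMatrix ξ)ᵀ * G.dartSourceMatrix R - G.signedDartReversalMatrix ξ := by
  ext e f
  have : f = e.symm ↔ f.fst = e.snd ∧ f.snd = e.fst := by
    rw [Dart.ext_iff, Prod.ext_iff]; rfl
  simp only [signedNonBacktrackingMatrix, signedDartTargetMatrix, dartSourceMatrix,
    signedDartReversalMatrix, Matrix.sub_apply, Matrix.mul_apply, transpose_apply, of_apply,
    ite_mul, zero_mul, Finset.sum_ite_eq, Finset.mem_univ, if_true, this]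
  by_cases h1 : f.fst = e.snd <;> by_cases h2 : f.snd = e.fst <;>
    simp [h1, h2, eq_comm (a := e.snd), eq_comm (a := e.fst)]

variable [DecidableRel G.Adj]

theorem dartSourceMatrix_mul_transpose_signedDartTargetMatrix :
    G.dartSourceMatrix R * (G.signedDartTargetMatrix ξ)ᵀ = G.signedAdjMatrix ξ := by
  ext v w
  simp only [Matrix.mul_apply, dartSourceMatrix, signedDartTargetMatrix, signedAdjMatrix,
    transpose_apply, of_apply, ite_mul, one_mul, zero_mul, ← ite_and]
  by_cases h : G.Adj v w
  · rw [Fintype.sum_eq_single ⟨(v, w), h⟩, if_pos ⟨rfl, rfl⟩, if_pos h]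
    rintro d hd
    exact if_neg fun ⟨h1, h2⟩ => hd ((Dart.ext_iff _ _).2 (Prod.ext h1 h2))
  · rw [if_neg h]
    exact Finset.sum_eq_zero fun d _ => if_neg fun ⟨h1, h2⟩ => h (h1 ▸ h2 ▸ d.adj)

theorem card_filter_dart_snd_eq_degree (v : V) : #{d : G.Dart | d.snd = v} = G.degree v := by
  rw [← G.dart_fst_fiber_card_eq_degree]
  exact Finset.card_nbij' Dart.symm Dart.symm (fun _ => by simp) (fun _ => by simp)
    (fun d _ => d.symm_symm) (fun d _ => d.symm_symm)

theorem signedDartTargetMatrix_mul_transpose_self (hsq : ∀ d : G.Dart, ξ d.fst d.snd ^ 2 = 1) :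
    G.signedDartTargetMatrix ξ * (G.signedDartTargetMatrix ξ)ᵀ =
      diagonal fun v => (G.degree v : R) := by
  ext v w
  simp only [Matrix.mul_apply, signedDartTargetMatrix, transpose_apply, of_apply, ite_mul,
    mul_ite, zero_mul, mul_zero, ← sq, hsq, ← ite_and, diagonal_apply]
  by_cases hvw : v = w
  · subst hvw
    simp [Finset.sum_boole, card_filter_dart_snd_eq_degree]
  · rw [if_neg hvw]
    refine Finset.sum_eq_zero fun d _ => if_neg ?_
    rintro ⟨h1, h2⟩
    exact hvw (h2 ▸ h1)

theorem dartSourceMatrix_mul_signedDartReversalMatrix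
    (hsymm : ∀ d : G.Dart, ξ d.snd d.fst = ξ d.fst d.snd) :
    G.dartSourceMatrix R * G.signedDartReversalMatrix ξ = G.signedDartTargetMatrix ξ := by
  ext v f
  rw [Matrix.mul_apply, Fintype.sum_eq_single f.symm]
  · simp [dartSourceMatrix, signedDartReversalMatrix, signedDartTargetMatrix, hsymm]
  · intro d hd
    have : f ≠ d.symm := fun h => hd (h ▸ d.symm_symm)
    simp [signedDartReversalMatrix, this]

theorem signedDartReversalMatrix_mul_self (hsymm : ∀ d : G.Dart, ξ d.snd d.fst = ξ d.fst d.snd)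
    (hsq : ∀ d : G.Dart, ξ d.fst d.snd ^ 2 = 1) :
    G.signedDartReversalMatrix ξ * G.signedDartReversalMatrix ξ = 1 := by
  ext e f
  rw [Matrix.mul_apply, Fintype.sum_eq_single e.symm]
  · by_cases h : e = f
    · subst h
      simp [signedDartReversalMatrix, hsymm, ← sq, hsq]
    · simp [signedDartReversalMatrix, h, Ne.symm h]
  · intro d hd
    simp [signedDartReversalMatrix, hd]

theorem det_one_sub_smul_signedDartReversalMatrix
    (hsymm : ∀ d : G.Dart, ξ d.snd d.fst = ξ d.fst d.snd)
    (hsq : ∀ d : G.Dart, ξ d.fst d.snd ^ 2 = 1) (u : R) :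
    det (1 - u • G.signedDartReversalMatrix ξ) = (1 - u ^ 2) ^ #G.edgeFinset := by
  let f := Fintype.equivFin V
  let p : G.Dart → Prop := fun d => f d.fst < f d.snd
  have hp (d : G.Dart) : p d.symm ↔ ¬p d :=
    ⟨lt_asymm, fun h => ((f.injective.ne d.adj.ne).lt_or_gt).resolve_left h⟩
  have hw (d : G.Dart) : ξ d.fst d.snd * ξ d.symm.fst d.symm.snd = 1 := by
    simp [hsymm, ← sq, hsq]
  rw [signedDartReversalMatrix, det_one_sub_smul_of_involutive _ Dart.symm_involutive p hp _ hw]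
  congr 1
  have hswap : Fintype.card {d // ¬p d} = Fintype.card {d // p d} :=
    Fintype.card_congr ((Dart.symm_involutive.toPerm _).subtypeEquiv fun d => (hp d).symm)
  have hcompl := Fintype.card_subtype_compl p
  have hdarts := G.dart_card_eq_twice_card_edges
  have hle := Fintype.card_subtype_le p
  omega

theorem det_one_sub_smul_signedNonBacktrackingMatrix_mul_pow
    (hsymm : ∀ d : G.Dart, ξ d.snd d.fst = ξ d.fst d.snd)
    (hsq : ∀ d : G.Dart, ξ d.fst d.snd ^ 2 = 1) (u : R) :
    det (1 - u • G.signedNonBacktrackingMatrix ξ) * (1 - u ^ 2) ^ Fintype.card V *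
        (1 - u ^ 2) ^ #G.edgeFinset =
      det ((1 - u ^ 2) • 1 + u ^ 2 • diagonal (fun v => (G.degree v : R)) -
          u • G.signedAdjMatrix ξ) * (1 - u ^ 2) ^ #G.edgeFinset *
        (1 - u ^ 2) ^ #G.edgeFinset := by
  set S := G.dartSourceMatrix R
  set T := G.signedDartTargetMatrix ξ
  set J := G.signedDartReversalMatrix ξ
  have hL : (1 - u ^ 2) • 1 - (S - u • T) * (u • Tᵀ) = (1 - u ^ 2) • 1 +
      u ^ 2 • diagonal (fun v => (G.degree v : R)) - u • G.signedAdjMatrix ξ := by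
    rw [Matrix.sub_mul, Matrix.mul_smul, Matrix.smul_mul, Matrix.mul_smul,
      dartSourceMatrix_mul_transpose_signedDartTargetMatrix,
      signedDartTargetMatrix_mul_transpose_self G ξ hsq]
    module
  calc _ = (1 - u ^ 2) ^ Fintype.card V *
        det ((1 - u • G.signedNonBacktrackingMatrix ξ) * (1 - u • J)) := by
        rw [det_mul, det_one_sub_smul_signedDartReversalMatrix G ξ hsymm hsq]; ring
    _ = (1 - u ^ 2) ^ Fintype.card V * det ((1 - u ^ 2) • 1 - (u • Tᵀ) * (S - u • T)) := by
        rw [signedNonBacktrackingMatrix_eq,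
          one_sub_smul_mul_one_sub_smul_of_mul_self_eq_one _ _ _ _
          (signedDartReversalMatrix_mul_self G ξ hsymm hsq)
          (dartSourceMatrix_mul_signedDartReversalMatrix G ξ hsymm)]
    _ = (1 - u ^ 2) ^ Fintype.card G.Dart *
        det ((1 - u ^ 2) • 1 - (S - u • T) * (u • Tᵀ)) :=
        pow_card_mul_det_smul_one_sub_mul_comm _ _ _
    _ = _ := by rw [hL, dart_card_eq_twice_card_edges]; ring

end SimpleGraph

theorem eq_of_forall_mul_one_sub_sq_pow_eq {f g : ℝ → ℝ} (hf : Continuous f) (hg : Continuous g)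
    (k : ℕ) (h : ∀ u, f u * (1 - u ^ 2) ^ k = g u * (1 - u ^ 2) ^ k) : f = g := by
  refine Continuous.ext_on (dense_univ.sdiff_finset {1, -1}) hf hg fun u hu => ?_
  have hu2 : u ^ 2 ≠ 1 := sq_ne_one_iff.2 (by simpa using hu)
  exact mul_right_cancel₀ (pow_ne_zero k (sub_ne_zero.2 hu2.symm)) (h u)

/-- Ihara–Bass formula for edge-signed graphs.  Let `G` be a finite simple graph
with signs `ξ(u,v) ∈ {±1}` on its edges, `A` the signed adjacency matrix, `D` the
degree matrix, `L(u) = (1-u²)·1 + u²·D - u·A` the deformed Laplacian, and `B` the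
signed non-backtracking matrix (indexed by the `2|E|` darts).  Then for all real `u`,
`det(1 - u·B)·(1-u²)^|V| = det(L(u))·(1-u²)^|E|`. -/
theorem stmt_4 (V : Type) [Fintype V] [DecidableEq V]
    (G : SimpleGraph V) [DecidableRel G.Adj]
    (ξ : V → V → ℝ) (hsymm : ∀ u v, ξ u v = ξ v u)
    (hsign : ∀ u v, G.Adj u v → ξ u v = 1 ∨ ξ u v = -1)
    (u : ℝ)
    (A : Matrix V V ℝ) (hA : A = fun x y => if G.Adj x y then ξ x y else 0)
    (D : Matrix V V ℝ) (hD : D = Matrix.diagonal fun v => (G.degree v : ℝ))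
    (B : Matrix G.Dart G.Dart ℝ)
    (hB : B = fun e f => if e.snd = f.fst ∧ e.fst ≠ f.snd then ξ e.fst e.snd else 0) :
    Matrix.det (1 - u • B) * (1 - u ^ 2) ^ Fintype.card V
      = Matrix.det ((1 - u ^ 2) • (1 : Matrix V V ℝ) + u ^ 2 • D - u • A)
          * (1 - u ^ 2) ^ G.edgeFinset.card := by
  have hsymm_dart (d : G.Dart) : ξ d.snd d.fst = ξ d.fst d.snd := hsymm _ _
  have hsq (d : G.Dart) : ξ d.fst d.snd ^ 2 = 1 := by
    rcases hsign _ _ d.adj with h | h <;> simp [h]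
  subst hA hD hB
  have key := G.det_one_sub_smul_signedNonBacktrackingMatrix_mul_pow ξ hsymm_dart hsq
  refine congrFun (eq_of_forall_mul_one_sub_sq_pow_eq ?_ ?_ _ key) u <;> fun_prop
end

section
/- Let d ≥ c ≥ 2 be integers, set ρ₁ = √((c−1)(d−1)), and let r be a real number with 0 < |r| < 1/ρ₁. Define C = (1−r)(1 + (c−1)r)/(1 + (c−1)r²). Then C > 0, and the sequence h ↦ |r|^h · (1 + h·C), h ∈ ℕ, is strictly decreasing; equivalently, the absolute value of r^h·(1 + h(1−r)(1+(c−1)r)/(1+(c−1)r²)) is a strictly decreasing function of h ∈ ℕ. -/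
/-- For integers `d ≥ c ≥ 2`, `ρ₁ = √((c-1)(d-1))`, and a real `r` with
`0 < |r| < 1/ρ₁`: the constant `C = (1-r)(1+(c-1)r)/(1+(c-1)r²)` is positive, and
`h ↦ |r|^h·(1 + h·C)` is strictly decreasing in `h ∈ ℕ`; equivalently, the absolute
value of `r^h·(1 + h(1-r)(1+(c-1)r)/(1+(c-1)r²))` is strictly decreasing in `h`. -/
theorem stmt_14 (c d : ℕ) (hc : 2 ≤ c) (hcd : c ≤ d) (r : ℝ) (hr0 : r ≠ 0)
    (hr : |r| < 1 / Real.sqrt (((c : ℝ) - 1) * ((d : ℝ) - 1))) :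
    0 < (1 - r) * (1 + ((c : ℝ) - 1) * r) / (1 + ((c : ℝ) - 1) * r ^ 2)
    ∧ StrictAnti (fun h : ℕ =>
        |r| ^ h * (1 + (h : ℝ) * ((1 - r) * (1 + ((c : ℝ) - 1) * r) / (1 + ((c : ℝ) - 1) * r ^ 2))))
    ∧ StrictAnti (fun h : ℕ =>
        |r ^ h * (1 + (h : ℝ) * (1 - r) * (1 + ((c : ℝ) - 1) * r) / (1 + ((c : ℝ) - 1) * r ^ 2))|) := by
  set b : ℝ := (c : ℝ) - 1 with hbdef
  have hc2 : (2:ℝ) ≤ (c:ℝ) := by exact_mod_cast hc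
  have hcd' : (c:ℝ) ≤ (d:ℝ) := by exact_mod_cast hcd
  have hb : (1:ℝ) ≤ b := by rw [hbdef]; linarith
  have hbd : b ≤ (d:ℝ) - 1 := by rw [hbdef]; linarith
  have hb0 : (0:ℝ) < b := by linarith
  have hsqrt : b ≤ Real.sqrt (b * ((d:ℝ) - 1)) := by
    have hbb : b = Real.sqrt (b * b) := (Real.sqrt_mul_self hb0.le).symm
    rw [hbb]
    exact Real.sqrt_le_sqrt (by nlinarith)
  have hs : 0 < Real.sqrt (b * ((d:ℝ) - 1)) := lt_of_lt_of_le hb0 hsqrt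
  have hbr : b * |r| < 1 := by
    have h1 : |r| * Real.sqrt (b * ((d:ℝ) - 1)) < 1 := by
      rw [lt_div_iff₀ hs] at hr; linarith
    nlinarith [abs_nonneg r]
  have hra : 0 < |r| := abs_pos.mpr hr0
  have hr1 : |r| < 1 := by nlinarith
  have habs1 : r ≤ |r| := le_abs_self r
  have habs2 : -|r| ≤ r := neg_abs_le r
  have hD : 0 < 1 + b * r ^ 2 := by nlinarith [sq_nonneg r]
  have hN1 : 0 < 1 - r := by linarith
  have hN2 : 0 < 1 + b * r := by nlinarith
  set C : ℝ := (1 - r) * (1 + b * r) / (1 + b * r ^ 2) with hCdef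
  have hC : 0 < C := div_pos (mul_pos hN1 hN2) hD
  have hnum : |r| * ((1 + b * r ^ 2) + (1 - r) * (1 + b * r)) < 1 + b * r ^ 2 := by
    have hsq : 0 < (1 - |r|) ^ 2 := pow_pos (by linarith) 2
    have hmm : (b - 1) * (r * |r|) ≤ (b - 1) * (|r| * |r|) :=
      mul_le_mul_of_nonneg_left (mul_le_mul_of_nonneg_right habs1 (abs_nonneg r))
        (by linarith)
    nlinarith [sq_abs r]
  have hkey : |r| * (1 + C) < 1 := by
    have h1 : 1 + C = ((1 + b * r ^ 2) + (1 - r) * (1 + b * r)) / (1 + b * r ^ 2) := by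
      rw [hCdef]; field_simp
    rw [h1, ← mul_div_assoc, div_lt_one hD]
    exact hnum
  have hSA : StrictAnti (fun h : ℕ => |r| ^ h * (1 + (h : ℝ) * C)) := by
    apply strictAnti_nat_of_succ_lt
    intro n
    have hp : (0:ℝ) < |r| ^ n := pow_pos hra n
    have hn : (0:ℝ) ≤ (n:ℝ) := Nat.cast_nonneg n
    have step : |r| * (1 + ((n:ℝ) + 1) * C) < 1 + (n:ℝ) * C := by
      nlinarith [mul_nonneg hn (mul_nonneg (sub_nonneg.mpr hr1.le) hC.le)]
    calc |r| ^ (n + 1) * (1 + ((n + 1 : ℕ) : ℝ) * C)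
        = |r| ^ n * (|r| * (1 + ((n:ℝ) + 1) * C)) := by push_cast; ring
      _ < |r| ^ n * (1 + (n:ℝ) * C) := by
          exact mul_lt_mul_of_pos_left step hp
  refine ⟨hC, hSA, ?_⟩
  have heq : ∀ h : ℕ,
      |r ^ h * (1 + (h : ℝ) * (1 - r) * (1 + b * r) / (1 + b * r ^ 2))|
        = |r| ^ h * (1 + (h : ℝ) * C) := by
    intro h
    have hx : 0 < 1 + (h:ℝ) * C := by
      have := mul_nonneg (Nat.cast_nonneg h : (0:ℝ) ≤ (h:ℝ)) hC.le
      linarith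
    have harg : (h:ℝ) * (1 - r) * (1 + b * r) / (1 + b * r ^ 2) = (h:ℝ) * C := by
      rw [hCdef]; ring
    rw [abs_mul, abs_pow, harg, abs_of_pos hx]
  intro m n hmn
  simp only [heq]
  exact hSA hmn
end
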